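/- Let y₀ ∈ ℛ \ {0} and T ∈ (0,∞). Then (NP)^{T,y₀} has at least one minimal norm control, and there exists z ∈ ℝⁿ such that the function t ↦ B^⊤·exp((T−t)·A^⊤)·z is nonzero for a.e. t ∈ (0,T) and every minimal norm control v* of (NP)^{T,y₀} satisfies ⟨v*(t), B^⊤·exp((T−t)·A^⊤)·z⟩ = N(T,y₀)·‖B^⊤·exp((T−t)·A^⊤)·z‖ for a.e. t ∈ (0,T). -/

import Mathlib

/-!
Setting: fix `n, m ≥ 1`, a matrix `A ∈ ℝ^{n×n}` and a nonzero matrix `B ∈ ℝ^{n×m}`.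
States live in `EuclideanSpace ℝ (Fin n)` and control values in `EuclideanSpace ℝ (Fin m)`
(so that all norms are the Euclidean ones).  For `y₀ ∈ ℝⁿ`, `t ≥ 0` and a control `u`,
the state is `y(t;y₀,u) = e^{tA} y₀ + ∫₀ᵗ e^{(t-s)A} B u(s) ds`.
-/

open MeasureTheory Set Matrix
open scoped ENNReal RealInnerProductSpace

noncomputable section

namespace ControlBBP

/-- Matrix–vector multiplication, regarded as a map between Euclidean spaces. -/
def mulVecE {a b : ℕ} (M : Matrix (Fin a) (Fin b) ℝ)
    (x : EuclideanSpace ℝ (Fin b)) : EuclideanSpace ℝ (Fin a) :=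
  (EuclideanSpace.equiv (Fin a) ℝ).symm (M.mulVec (EuclideanSpace.equiv (Fin b) ℝ x))

variable {n m : ℕ}

/-- `∫₀ᵀ e^{(T-s)A} B v(s) ds`, the state at time `T` starting from `0` with control `v`. -/
def reachOutput (A : Matrix (Fin n) (Fin n) ℝ) (B : Matrix (Fin n) (Fin m) ℝ)
    (T : ℝ) (v : ℝ → EuclideanSpace ℝ (Fin m)) : EuclideanSpace ℝ (Fin n) :=
  ∫ s in Ioc (0 : ℝ) T, mulVecE (NormedSpace.exp ((T - s) • A)) (mulVecE B (v s))

/-- The state `y(t; y₀, u) = e^{tA} y₀ + ∫₀ᵗ e^{(t-s)A} B u(s) ds`. -/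
def state (A : Matrix (Fin n) (Fin n) ℝ) (B : Matrix (Fin n) (Fin m) ℝ)
    (y0 : EuclideanSpace ℝ (Fin n)) (t : ℝ) (u : ℝ → EuclideanSpace ℝ (Fin m)) :
    EuclideanSpace ℝ (Fin n) :=
  mulVecE (NormedSpace.exp (t • A)) y0 + reachOutput A B t u

/-- The `L^∞(0,T;ℝ^m)`-norm of a control, valued in `[0,∞]`. -/
def supNorm (T : ℝ) (v : ℝ → EuclideanSpace ℝ (Fin m)) : ℝ≥0∞ :=
  eLpNorm v ⊤ (volume.restrict (Ioo (0 : ℝ) T))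

/-- `v` is an admissible control for the minimal norm problem `(NP)^{T,y₀}`:
it is measurable, essentially bounded on `(0,T)`, and steers `y₀` to `0` at time `T`. -/
def NPAdmissible (A : Matrix (Fin n) (Fin n) ℝ) (B : Matrix (Fin n) (Fin m) ℝ)
    (T : ℝ) (y0 : EuclideanSpace ℝ (Fin n)) (v : ℝ → EuclideanSpace ℝ (Fin m)) : Prop :=
  Measurable v ∧ supNorm T v < ⊤ ∧ state A B y0 T v = 0

/-- The minimal norm `N(T,y₀) ∈ [0,∞]` (with `inf ∅ = ∞`). -/
def Nmin (A : Matrix (Fin n) (Fin n) ℝ) (B : Matrix (Fin n) (Fin m) ℝ)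
    (T : ℝ) (y0 : EuclideanSpace ℝ (Fin n)) : ℝ≥0∞ :=
  ⨅ (v : ℝ → EuclideanSpace ℝ (Fin m)) (_ : NPAdmissible A B T y0 v), supNorm T v

/-- `v` is a minimal norm control for `(NP)^{T,y₀}`. -/
def IsMinNormControl (A : Matrix (Fin n) (Fin n) ℝ) (B : Matrix (Fin n) (Fin m) ℝ)
    (T : ℝ) (y0 : EuclideanSpace ℝ (Fin n)) (v : ℝ → EuclideanSpace ℝ (Fin m)) : Prop :=
  NPAdmissible A B T y0 v ∧ supNorm T v = Nmin A B T y0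

/-- `(NP)^{T,y₀}` has the bang-bang property: every minimal norm control `v` satisfies
`‖v(t)‖ = N(T,y₀)` for a.e. `t ∈ (0,T)`. -/
def NPBangBang (A : Matrix (Fin n) (Fin n) ℝ) (B : Matrix (Fin n) (Fin m) ℝ)
    (T : ℝ) (y0 : EuclideanSpace ℝ (Fin n)) : Prop :=
  ∀ v, IsMinNormControl A B T y0 v →
    ∀ᵐ t ∂(volume.restrict (Ioo (0 : ℝ) T)), ‖v t‖ = (Nmin A B T y0).toReal

/-- `ℛ`, the span of the columns of `B, AB, A²B, …, AⁿB`. -/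
def reach (A : Matrix (Fin n) (Fin n) ℝ) (B : Matrix (Fin n) (Fin m) ℝ) :
    Submodule ℝ (EuclideanSpace ℝ (Fin n)) :=
  Submodule.span ℝ
    {x | ∃ (k : ℕ) (j : Fin m), k ≤ n ∧ x = mulVecE (A ^ k * B) (EuclideanSpace.single j 1)}

/-- Membership in the constraint set `𝒰^M`: measurable and `‖u(t)‖ ≤ M` a.e. on `(0,∞)`. -/
def MemU (M : ℝ) (u : ℝ → EuclideanSpace ℝ (Fin m)) : Prop :=
  Measurable u ∧ ∀ᵐ t ∂(volume.restrict (Ioi (0 : ℝ))), ‖u t‖ ≤ M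

/-- `u` is an admissible control for the minimal time problem `(TP)^{M,y₀}`. -/
def TPAdmissible (A : Matrix (Fin n) (Fin n) ℝ) (B : Matrix (Fin n) (Fin m) ℝ)
    (M : ℝ) (y0 : EuclideanSpace ℝ (Fin n)) (u : ℝ → EuclideanSpace ℝ (Fin m)) : Prop :=
  MemU M u ∧ ∃ t : ℝ, 0 < t ∧ state A B y0 t u = 0

/-- The minimal time `T(M,y₀) ∈ (0,∞]` (with `inf ∅ = ∞`). -/
def minTime (A : Matrix (Fin n) (Fin n) ℝ) (B : Matrix (Fin n) (Fin m) ℝ)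
    (M : ℝ) (y0 : EuclideanSpace ℝ (Fin n)) : ℝ≥0∞ :=
  ⨅ (t : ℝ) (_ : 0 < t ∧ ∃ u, MemU M u ∧ state A B y0 t u = 0), ENNReal.ofReal t

/-- `u` is a minimal time control for `(TP)^{M,y₀}`: it lies in `𝒰^M` and
`y(T(M,y₀); y₀, u) = 0`. -/
def IsMinTimeControl (A : Matrix (Fin n) (Fin n) ℝ) (B : Matrix (Fin n) (Fin m) ℝ)
    (M : ℝ) (y0 : EuclideanSpace ℝ (Fin n)) (u : ℝ → EuclideanSpace ℝ (Fin m)) : Prop :=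
  MemU M u ∧ state A B y0 (minTime A B M y0).toReal u = 0

/-- `(TP)^{M,y₀}` has the bang-bang property: every minimal time control `u` satisfies
`‖u(t)‖ = M` for a.e. `t ∈ (0, T(M,y₀))`. -/
def TPBangBang (A : Matrix (Fin n) (Fin n) ℝ) (B : Matrix (Fin n) (Fin m) ℝ)
    (M : ℝ) (y0 : EuclideanSpace ℝ (Fin n)) : Prop :=
  ∀ u, IsMinTimeControl A B M y0 u →
    ∀ᵐ t ∂(volume.restrict (Ioo (0 : ℝ) (minTime A B M y0).toReal)), ‖u t‖ = M

/-- `N(∞,y₀) = inf_{T>0} N(T,y₀)`. -/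
def Ninf (A : Matrix (Fin n) (Fin n) ℝ) (B : Matrix (Fin n) (Fin m) ℝ)
    (y0 : EuclideanSpace ℝ (Fin n)) : ℝ≥0∞ :=
  ⨅ (T : ℝ) (_ : 0 < T), Nmin A B T y0

/-- `t ↦ B^⊤ e^{(T-t)A^⊤} z`. -/
def adjOut (A : Matrix (Fin n) (Fin n) ℝ) (B : Matrix (Fin n) (Fin m) ℝ)
    (T : ℝ) (z : EuclideanSpace ℝ (Fin n)) (t : ℝ) : EuclideanSpace ℝ (Fin m) :=
  mulVecE Bᵀ (mulVecE (NormedSpace.exp ((T - t) • Aᵀ)) z)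

/-- The reachable set `R_T`. -/
def reachSet (A : Matrix (Fin n) (Fin n) ℝ) (B : Matrix (Fin n) (Fin m) ℝ)
    (T : ℝ) : Set (EuclideanSpace ℝ (Fin n)) :=
  {x | ∃ v : ℝ → EuclideanSpace ℝ (Fin m),
    Measurable v ∧ supNorm T v < ⊤ ∧ reachOutput A B T v = x}

/-- The reachable norm `‖x‖_{R_T}`, valued in `[0,∞]`. -/
def reachNorm (A : Matrix (Fin n) (Fin n) ℝ) (B : Matrix (Fin n) (Fin m) ℝ)
    (T : ℝ) (x : EuclideanSpace ℝ (Fin n)) : ℝ≥0∞ :=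
  ⨅ (v : ℝ → EuclideanSpace ℝ (Fin m))
    (_ : Measurable v ∧ supNorm T v < ⊤ ∧ reachOutput A B T v = x), supNorm T v


/-! ### Auxiliary development -/

set_option synthInstance.maxHeartbeats 1000000
set_option maxHeartbeats 2000000

section BasicMulVec

variable {a b c : ℕ}

lemma mulVecE_apply (M : Matrix (Fin a) (Fin b) ℝ) (x : EuclideanSpace ℝ (Fin b))
    (i : Fin a) : mulVecE M x i = ∑ j, M i j * x j := rfl

lemma inner_mulVecE (M : Matrix (Fin a) (Fin b) ℝ) (u : EuclideanSpace ℝ (Fin b))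
    (z : EuclideanSpace ℝ (Fin a)) : ⟪mulVecE M u, z⟫ = ⟪u, mulVecE Mᵀ z⟫ := by
  simp only [PiLp.inner_apply, RCLike.inner_apply, conj_trivial, mulVecE_apply,
    Matrix.transpose_apply, Finset.sum_mul, Finset.mul_sum]
  rw [Finset.sum_comm]
  exact Finset.sum_congr rfl fun i _ => Finset.sum_congr rfl fun j _ => by ring

lemma mulVecE_add (M : Matrix (Fin a) (Fin b) ℝ) (x y : EuclideanSpace ℝ (Fin b)) :
    mulVecE M (x + y) = mulVecE M x + mulVecE M y := by
  ext i; simp [mulVecE_apply, mul_add, Finset.sum_add_distrib]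

lemma mulVecE_smul (M : Matrix (Fin a) (Fin b) ℝ) (r : ℝ) (x : EuclideanSpace ℝ (Fin b)) :
    mulVecE M (r • x) = r • mulVecE M x := by
  ext i; simp [mulVecE_apply, Finset.mul_sum]; exact Finset.sum_congr rfl fun j _ => by ring

lemma mulVecE_mul (M : Matrix (Fin a) (Fin b) ℝ) (N : Matrix (Fin b) (Fin c) ℝ)
    (x : EuclideanSpace ℝ (Fin c)) : mulVecE (M * N) x = mulVecE M (mulVecE N x) := by
  ext i
  simp only [mulVecE_apply, Matrix.mul_apply, Finset.sum_mul, Finset.mul_sum]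
  rw [Finset.sum_comm]
  exact Finset.sum_congr rfl fun _ _ => Finset.sum_congr rfl fun _ _ => by ring

lemma mulVecE_one (x : EuclideanSpace ℝ (Fin a)) : mulVecE 1 x = x := by
  ext i; simp [mulVecE_apply, Matrix.one_apply]

lemma mulVecE_matAdd (M N : Matrix (Fin a) (Fin b) ℝ) (x : EuclideanSpace ℝ (Fin b)) :
    mulVecE (M + N) x = mulVecE M x + mulVecE N x := by
  ext i; simp [mulVecE_apply, add_mul, Finset.sum_add_distrib]

lemma mulVecE_matSmul (r : ℝ) (M : Matrix (Fin a) (Fin b) ℝ) (x : EuclideanSpace ℝ (Fin b)) :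
    mulVecE (r • M) x = r • mulVecE M x := by
  ext i; simp [mulVecE_apply, Finset.mul_sum]; exact Finset.sum_congr rfl fun j _ => by ring

/-- `mulVecE` as a continuous linear map. -/
def mCLM (M : Matrix (Fin a) (Fin b) ℝ) :
    EuclideanSpace ℝ (Fin b) →L[ℝ] EuclideanSpace ℝ (Fin a) :=
  LinearMap.toContinuousLinearMap
    { toFun := mulVecE M, map_add' := mulVecE_add M, map_smul' := mulVecE_smul M }

lemma mCLM_apply (M : Matrix (Fin a) (Fin b) ℝ) (x : EuclideanSpace ℝ (Fin b)) :
    mCLM M x = mulVecE M x := rfl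

lemma mulVecE_zero (M : Matrix (Fin a) (Fin b) ℝ) : mulVecE M 0 = 0 := (mCLM M).map_zero

/-- `mulVecE` as linear in the matrix argument. -/
def mvELin (x : EuclideanSpace ℝ (Fin b)) :
    Matrix (Fin a) (Fin b) ℝ →ₗ[ℝ] EuclideanSpace ℝ (Fin a) :=
  { toFun := fun M => mulVecE M x,
    map_add' := fun M N => mulVecE_matAdd M N x,
    map_smul' := fun r M => mulVecE_matSmul r M x }

lemma mulVecE_matSum {ι : Type*} (s : Finset ι) (f : ι → Matrix (Fin a) (Fin b) ℝ)
    (x : EuclideanSpace ℝ (Fin b)) :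
    mulVecE (∑ i ∈ s, f i) x = ∑ i ∈ s, mulVecE (f i) x :=
  map_sum (mvELin x) f s

lemma toEuclideanCLM_apply_eq (M : Matrix (Fin a) (Fin a) ℝ) (x : EuclideanSpace ℝ (Fin a)) :
    Matrix.toEuclideanCLM (𝕜 := ℝ) M x = mulVecE M x := rfl

lemma toEuclideanCLM_pow_apply (M : Matrix (Fin a) (Fin a) ℝ) (k : ℕ)
    (x : EuclideanSpace ℝ (Fin a)) :
    ((Matrix.toEuclideanCLM (𝕜 := ℝ) M) ^ k) x = mulVecE (M ^ k) x := by
  rw [← map_pow]; rfl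

lemma expE (M : Matrix (Fin a) (Fin a) ℝ) (r : ℝ) (x : EuclideanSpace ℝ (Fin a)) :
    mulVecE (NormedSpace.exp (r • M)) x
      = NormedSpace.exp (r • Matrix.toEuclideanCLM (𝕜 := ℝ) M) x := by
  letI : SeminormedRing (Matrix (Fin a) (Fin a) ℝ) := Matrix.linftyOpSemiNormedRing
  letI : NormedRing (Matrix (Fin a) (Fin a) ℝ) := Matrix.linftyOpNormedRing
  letI : NormedAlgebra ℝ (Matrix (Fin a) (Fin a) ℝ) := Matrix.linftyOpNormedAlgebra
  letI : NormedAlgebra ℚ (Matrix (Fin a) (Fin a) ℝ) := .restrictScalars ℚ ℝ _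
  have hcont : Continuous (fun M : Matrix (Fin a) (Fin a) ℝ => Matrix.toEuclideanCLM (𝕜 := ℝ) M) :=
    LinearMap.continuous_of_finiteDimensional (𝕜 := ℝ)
      { toFun := fun M => Matrix.toEuclideanCLM (𝕜 := ℝ) M,
        map_add' := fun x y => by simp [map_add],
        map_smul' := fun c x => by simp [_root_.map_smul] }
  have h := NormedSpace.map_exp (Matrix.toEuclideanCLM (𝕜 := ℝ) (n := Fin a)) hcont (r • M)
  have h2 : Matrix.toEuclideanCLM (𝕜 := ℝ) (r • M)
      = r • Matrix.toEuclideanCLM (𝕜 := ℝ) M := by simp [_root_.map_smul]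
  have h3 : Matrix.toEuclideanCLM (𝕜 := ℝ) (NormedSpace.exp (r • M)) x
      = mulVecE (NormedSpace.exp (r • M)) x := rfl
  rw [← h3, ← h2]; exact congrArg (fun f => f x) h

end BasicMulVec

section CLMExp

variable {a : ℕ} {W : Type*} [NormedAddCommGroup W] [NormedSpace ℝ W]
variable (N : EuclideanSpace ℝ (Fin a) →L[ℝ] EuclideanSpace ℝ (Fin a))

/-- evaluation at `z` as CLM -/
def evCLM (z : EuclideanSpace ℝ (Fin a)) :
    (EuclideanSpace ℝ (Fin a) →L[ℝ] EuclideanSpace ℝ (Fin a)) →L[ℝ] EuclideanSpace ℝ (Fin a) :=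
  (ContinuousLinearMap.apply ℝ (EuclideanSpace ℝ (Fin a))) z

lemma pow_smul_apply (r : ℝ) (z : EuclideanSpace ℝ (Fin a)) (k : ℕ) :
    ((r • N) ^ k) z = r ^ k • (N ^ k) z := by
  induction k with
  | zero => simp
  | succ k ih =>
      rw [pow_succ' (r • N) k, pow_succ' N k, pow_succ' r k, ContinuousLinearMap.mul_apply,
        ContinuousLinearMap.mul_apply, ih, ContinuousLinearMap.smul_apply, _root_.map_smul,
        smul_smul]

lemma expApply_G (G : EuclideanSpace ℝ (Fin a) →L[ℝ] W) (r : ℝ) (z : EuclideanSpace ℝ (Fin a)) :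
    G (NormedSpace.exp (r • N) z)
      = ∑' (k : ℕ), ((k.factorial : ℝ)⁻¹ * r ^ k) • G ((N ^ k) z) := by
  have hsum := NormedSpace.expSeries_summable' (𝕂 := ℝ) (r • N)
  have h := ((G.comp (evCLM z)).map_tsum hsum)
  rw [NormedSpace.exp_eq_tsum ℝ]
  have h0 : ∀ k : ℕ, (G.comp (evCLM z)) ((k.factorial : ℝ)⁻¹ • (r • N) ^ k)
      = ((k.factorial : ℝ)⁻¹ * r ^ k) • G ((N ^ k) z) := by
    intro k
    simp only [ContinuousLinearMap.comp_apply, evCLM, ContinuousLinearMap.apply_apply,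
      ContinuousLinearMap.smul_apply, pow_smul_apply, _root_.map_smul, smul_smul]
  have h1 : (G.comp (evCLM z)) (∑' (k : ℕ), (k.factorial : ℝ)⁻¹ • (r • N) ^ k)
      = ∑' (k : ℕ), ((k.factorial : ℝ)⁻¹ * r ^ k) • G ((N ^ k) z) := by
    rw [h]; exact tsum_congr h0
  exact h1

lemma analyticOnNhd_expApply (G : EuclideanSpace ℝ (Fin a) →L[ℝ] W)
    (z : EuclideanSpace ℝ (Fin a)) (T : ℝ) :
    AnalyticOnNhd ℝ (fun t : ℝ => G (NormedSpace.exp ((T - t) • N) z)) univ := by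
  intro t _
  have h1 : AnalyticAt ℝ (fun t : ℝ => (T - t) • N) t :=
    ((analyticAt_const.sub analyticAt_id).smul analyticAt_const)
  have h2 : AnalyticAt ℝ
      (fun M : EuclideanSpace ℝ (Fin a) →L[ℝ] EuclideanSpace ℝ (Fin a) =>
        NormedSpace.exp M) ((T - t) • N) :=
    NormedSpace.analyticAt_exp_of_mem_ball (𝕂 := ℝ) _ (by
      rw [NormedSpace.expSeries_radius_eq_top]; exact edist_lt_top _ _)
  have h3 : AnalyticAt ℝ (fun t : ℝ => NormedSpace.exp ((T - t) • N)) t :=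
    AnalyticAt.comp (g := fun M : EuclideanSpace ℝ (Fin a) →L[ℝ] EuclideanSpace ℝ (Fin a)
      => NormedSpace.exp M) (f := fun t : ℝ => (T - t) • N) (x := t) h2 h1
  exact AnalyticAt.comp (g := fun M : EuclideanSpace ℝ (Fin a) →L[ℝ] EuclideanSpace ℝ (Fin a)
      => G (M z)) (f := fun t : ℝ => NormedSpace.exp ((T - t) • N)) (x := t)
    (((G.comp (evCLM z)).analyticAt (NormedSpace.exp ((T - t) • N)))) h3

lemma continuous_expApply (G : EuclideanSpace ℝ (Fin a) →L[ℝ] W)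
    (z : EuclideanSpace ℝ (Fin a)) (T : ℝ) :
    Continuous (fun t : ℝ => G (NormedSpace.exp ((T - t) • N) z)) := by
  rw [← continuousOn_univ]
  exact (analyticOnNhd_expApply N G z T).continuousOn

lemma hasDerivAt_expApply (G : EuclideanSpace ℝ (Fin a) →L[ℝ] W)
    (z : EuclideanSpace ℝ (Fin a)) (t : ℝ) :
    HasDerivAt (fun t : ℝ => G (NormedSpace.exp (t • N) z))
      (G (N (NormedSpace.exp (t • N) z))) t := by
  have hc : HasDerivAt (fun t : ℝ => NormedSpace.exp (t • N))
      (N * NormedSpace.exp (t • N)) t := _root_.hasDerivAt_exp_smul_const' N t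
  have h := hc.clm_apply (hasDerivAt_const t z)
  simp only [add_zero, ContinuousLinearMap.zero_apply, map_zero] at h
  exact (G.hasFDerivAt.comp_hasDerivAt t h)

end CLMExp

section Main

variable {n m : ℕ}

/-- The dual functional. -/
def JJ (A : Matrix (Fin n) (Fin n) ℝ) (B : Matrix (Fin n) (Fin m) ℝ) (T : ℝ)
    (z : EuclideanSpace ℝ (Fin n)) : ℝ :=
  ∫ s in Ioc (0 : ℝ) T, ‖adjOut A B T z s‖

variable (A : Matrix (Fin n) (Fin n) ℝ) (B : Matrix (Fin n) (Fin m) ℝ) (T : ℝ)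

lemma adjOut_eq (z : EuclideanSpace ℝ (Fin n)) (t : ℝ) :
    adjOut A B T z t
      = mCLM Bᵀ (NormedSpace.exp ((T - t) • Matrix.toEuclideanCLM (𝕜 := ℝ) Aᵀ) z) := by
  rw [adjOut, expE]; rfl

lemma continuous_adjOut (z : EuclideanSpace ℝ (Fin n)) :
    Continuous (fun t => adjOut A B T z t) := by
  simp only [adjOut_eq]
  exact continuous_expApply _ (mCLM Bᵀ) z T

lemma analyticOnNhd_adjOut (z : EuclideanSpace ℝ (Fin n)) :
    AnalyticOnNhd ℝ (fun t => adjOut A B T z t) univ := by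
  simp only [adjOut_eq]
  exact analyticOnNhd_expApply _ (mCLM Bᵀ) z T

lemma adjOut_add (z w : EuclideanSpace ℝ (Fin n)) (t : ℝ) :
    adjOut A B T (z + w) t = adjOut A B T z t + adjOut A B T w t := by
  simp only [adjOut_eq, map_add]

lemma adjOut_smul (r : ℝ) (z : EuclideanSpace ℝ (Fin n)) (t : ℝ) :
    adjOut A B T (r • z) t = r • adjOut A B T z t := by
  simp only [adjOut_eq, _root_.map_smul]

lemma adjOut_zero (t : ℝ) : adjOut A B T (0 : EuclideanSpace ℝ (Fin n)) t = 0 := by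
  simp only [adjOut_eq, map_zero]

lemma inner_kernel_adjOut (v : EuclideanSpace ℝ (Fin m)) (z : EuclideanSpace ℝ (Fin n)) (s : ℝ) :
    ⟪mulVecE (NormedSpace.exp ((T - s) • A)) (mulVecE B v), z⟫ = ⟪v, adjOut A B T z s⟫ := by
  rw [inner_mulVecE, inner_mulVecE]
  congr 2
  rw [← Matrix.transpose_smul, Matrix.exp_transpose]

end Main


section ReachFacts

variable {n m : ℕ} (A : Matrix (Fin n) (Fin n) ℝ) (B : Matrix (Fin n) (Fin m) ℝ)

lemma col_mem_reach (hn : 1 ≤ n) (k : ℕ) (j : Fin m) :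
    mulVecE (A ^ k * B) (EuclideanSpace.single j 1) ∈ reach A B := by
  by_cases hk : k ≤ n
  · exact Submodule.subset_span ⟨k, j, hk, rfl⟩
  · have hmonic := A.charpoly_monic
    have hdeg : A.charpoly.natDegree = n := by
      rw [A.charpoly_natDegree_eq_dim, Fintype.card_fin]
    set r := (Polynomial.X ^ k) %ₘ A.charpoly with hr
    have hAk : A ^ k = Polynomial.aeval A r := by
      have h1 : (Polynomial.X ^ k) %ₘ A.charpoly
          + A.charpoly * ((Polynomial.X ^ k) /ₘ A.charpoly) = Polynomial.X ^ k :=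
        Polynomial.modByMonic_add_div _ _
      have h2 := congrArg (Polynomial.aeval A) h1
      rw [map_add, _root_.map_mul, Matrix.aeval_self_charpoly, zero_mul, add_zero,
        map_pow, Polynomial.aeval_X] at h2
      exact h2.symm
    have hdlt : r.natDegree < n := by
      by_cases hr0 : r = 0
      · rw [hr0]; simpa using Nat.one_le_iff_ne_zero.1 hn |> Nat.pos_of_ne_zero
      · have h3 : r.degree < A.charpoly.degree :=
          Polynomial.degree_modByMonic_lt _ hmonic
        have h4 := Polynomial.natDegree_lt_natDegree hr0 h3
        exact hdeg ▸ h4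
    rw [hAk, Polynomial.aeval_eq_sum_range, Matrix.sum_mul, mulVecE_matSum]
    refine Submodule.sum_mem _ fun i hi => ?_
    have hsm : r.coeff i • A ^ i * B = r.coeff i • (A ^ i * B) := Matrix.smul_mul _ _ _
    rw [hsm, mulVecE_matSmul]
    refine Submodule.smul_mem _ _ (Submodule.subset_span ⟨i, j, ?_, rfl⟩)
    have hile : i ≤ r.natDegree := by
      have := Finset.mem_range.1 hi; omega
    omega

lemma mulVecE_A_mem_reach (hn : 1 ≤ n) {x : EuclideanSpace ℝ (Fin n)} (hx : x ∈ reach A B) :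
    mulVecE A x ∈ reach A B := by
  induction hx using Submodule.span_induction with
  | mem u hu =>
      obtain ⟨k, j, _, rfl⟩ := hu
      have hA : A ^ (k + 1) * B = A * (A ^ k * B) := by
        rw [pow_succ', Matrix.mul_assoc]
      have : mulVecE A (mulVecE (A ^ k * B) (EuclideanSpace.single j 1))
          = mulVecE (A ^ (k + 1) * B) (EuclideanSpace.single j 1) := by
        rw [← mulVecE_mul, ← hA]
      rw [this]; exact col_mem_reach A B hn (k+1) j
  | zero => rw [mulVecE_zero]; exact Submodule.zero_mem _
  | add u v _ _ hu hv => rw [mulVecE_add]; exact Submodule.add_mem _ hu hv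
  | smul r u _ hu => rw [mulVecE_smul]; exact Submodule.smul_mem _ _ hu

lemma pow_mulVecE_mem_reach (hn : 1 ≤ n) {y0 : EuclideanSpace ℝ (Fin n)}
    (hy : y0 ∈ reach A B) (k : ℕ) : mulVecE (A ^ k) y0 ∈ reach A B := by
  induction k with
  | zero => rw [pow_zero, mulVecE_one]; exact hy
  | succ k ih => rw [pow_succ', mulVecE_mul]; exact mulVecE_A_mem_reach A B hn ih

lemma mem_orth_iff (hn : 1 ≤ n) (z : EuclideanSpace ℝ (Fin n)) :
    z ∈ (reach A B)ᗮ ↔ ∀ k : ℕ, mulVecE Bᵀ (mulVecE (Aᵀ ^ k) z) = 0 := by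
  constructor
  · intro hz k
    ext j
    have h0 : (0 : EuclideanSpace ℝ (Fin m)) j = 0 := rfl
    rw [h0, ← mulVecE_mul]
    have h1 : Bᵀ * Aᵀ ^ k = (A ^ k * B)ᵀ := by
      rw [Matrix.transpose_mul, Matrix.transpose_pow]
    rw [h1]
    have h2 := inner_mulVecE (A ^ k * B) (EuclideanSpace.single j 1) z
    have h3 : ⟪mulVecE (A ^ k * B) (EuclideanSpace.single j 1), z⟫ = 0 :=
      (Submodule.mem_orthogonal _ z).1 hz _ (col_mem_reach A B hn k j)
    rw [h3] at h2
    have h4 : ⟪EuclideanSpace.single j (1:ℝ), mulVecE (A ^ k * B)ᵀ z⟫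
        = mulVecE (A ^ k * B)ᵀ z j := by
      rw [EuclideanSpace.inner_single_left]; simp
    rw [h4] at h2
    exact h2.symm
  · intro h
    rw [Submodule.mem_orthogonal]
    intro u hu
    induction hu using Submodule.span_induction with
    | mem u hu =>
        obtain ⟨k, j, _, rfl⟩ := hu
        rw [inner_mulVecE]
        have h1 : (A ^ k * B)ᵀ = Bᵀ * Aᵀ ^ k := by
          rw [Matrix.transpose_mul, Matrix.transpose_pow]
        rw [h1, mulVecE_mul, h k]
        simp
    | zero => simp
    | add u v _ _ hu hv => rw [inner_add_left, hu, hv]; ring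
    | smul r u _ hu => rw [real_inner_smul_left, hu]; ring

lemma adjOut_eq_zero_of_orth (hn : 1 ≤ n) (T : ℝ) {z : EuclideanSpace ℝ (Fin n)}
    (hz : z ∈ (reach A B)ᗮ) (t : ℝ) : adjOut A B T z t = 0 := by
  rw [adjOut_eq, expApply_G]
  have h := (mem_orth_iff A B hn z).1 hz
  have h0 : ∀ k : ℕ, mCLM Bᵀ (((Matrix.toEuclideanCLM (𝕜 := ℝ) Aᵀ) ^ k) z) = 0 := by
    intro k
    rw [toEuclideanCLM_pow_apply, mCLM_apply]
    exact h k
  simp only [h0, smul_zero]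
  exact tsum_zero

lemma exp_mem_reach (hn : 1 ≤ n) (T : ℝ) {y0 : EuclideanSpace ℝ (Fin n)}
    (hy : y0 ∈ reach A B) :
    mulVecE (NormedSpace.exp (T • A)) y0 ∈ reach A B := by
  rw [← Submodule.orthogonal_orthogonal (reach A B), Submodule.mem_orthogonal]
  intro z hz
  rw [real_inner_comm]
  have h1 : ⟪mulVecE (NormedSpace.exp (T • A)) y0, z⟫
      = ⟪y0, mulVecE (NormedSpace.exp (T • Aᵀ)) z⟫ := by
    rw [inner_mulVecE, ← Matrix.transpose_smul, Matrix.exp_transpose]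
  have h5 := expApply_G (Matrix.toEuclideanCLM (𝕜 := ℝ) Aᵀ) ((innerSL ℝ) y0) T z
  simp only [innerSL_apply_apply] at h5
  rw [h1, expE, h5]
  have h0 : ∀ k : ℕ, ⟪y0, ((Matrix.toEuclideanCLM (𝕜 := ℝ) Aᵀ) ^ k) z⟫ = 0 := by
    intro k
    rw [toEuclideanCLM_pow_apply]
    have h2 : ⟪y0, mulVecE (Aᵀ ^ k) z⟫ = ⟪mulVecE (A ^ k) y0, z⟫ := by
      have h6 := inner_mulVecE (A ^ k) y0 z
      rw [Matrix.transpose_pow] at h6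
      exact h6.symm
    have h3 : ⟪mulVecE (A ^ k) y0, z⟫ = 0 :=
      (Submodule.mem_orthogonal _ z).1 hz _ (pow_mulVecE_mem_reach A B hn hy k)
    exact h2.trans h3
  simp only [h0, smul_zero]
  exact tsum_zero

end ReachFacts


section ExpApply2

variable {a : ℕ} {W : Type*} [NormedAddCommGroup W] [NormedSpace ℝ W]
variable (N : EuclideanSpace ℝ (Fin a) →L[ℝ] EuclideanSpace ℝ (Fin a))

lemma continuous_expApply' (G : EuclideanSpace ℝ (Fin a) →L[ℝ] W)
    (z : EuclideanSpace ℝ (Fin a)) :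
    Continuous (fun t : ℝ => G (NormedSpace.exp (t • N) z)) :=
  continuous_iff_continuousAt.2 fun t => (hasDerivAt_expApply N G z t).continuousAt

end ExpApply2

section JFacts

variable {n m : ℕ} (A : Matrix (Fin n) (Fin n) ℝ) (B : Matrix (Fin n) (Fin m) ℝ) (T : ℝ)

lemma integrableOn_norm_adjOut (z : EuclideanSpace ℝ (Fin n)) :
    IntegrableOn (fun s => ‖adjOut A B T z s‖) (Ioc 0 T) volume :=
  ((continuous_adjOut A B T z).norm).integrableOn_Ioc

lemma JJ_nonneg (z : EuclideanSpace ℝ (Fin n)) : 0 ≤ JJ A B T z :=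
  integral_nonneg fun _ => norm_nonneg _

lemma JJ_smul (r : ℝ) (z : EuclideanSpace ℝ (Fin n)) :
    JJ A B T (r • z) = |r| * JJ A B T z := by
  unfold JJ
  simp only [adjOut_smul, norm_smul, Real.norm_eq_abs]
  exact integral_const_mul _ _

lemma JJ_add_le (z w : EuclideanSpace ℝ (Fin n)) :
    JJ A B T (z + w) ≤ JJ A B T z + JJ A B T w := by
  unfold JJ
  rw [← integral_add (integrableOn_norm_adjOut A B T z) (integrableOn_norm_adjOut A B T w)]
  refine integral_mono (integrableOn_norm_adjOut A B T _)
    ((integrableOn_norm_adjOut A B T z).add (integrableOn_norm_adjOut A B T w)) fun s => ?_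
  rw [adjOut_add]
  exact norm_add_le _ _

lemma exists_JJ_bound (hT : 0 < T) :
    ∃ K : ℝ, 0 ≤ K ∧ ∀ z : EuclideanSpace ℝ (Fin n), JJ A B T z ≤ K * ‖z‖ := by
  have hc : ContinuousOn
      (fun s : ℝ => ‖NormedSpace.exp ((T - s) • Matrix.toEuclideanCLM (𝕜 := ℝ) Aᵀ)‖)
      (Icc 0 T) := by
    refine Continuous.continuousOn (Continuous.norm ?_)
    have h2 : Continuous (fun M : EuclideanSpace ℝ (Fin n) →L[ℝ] EuclideanSpace ℝ (Fin n)
        => NormedSpace.exp M) := by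
        letI : NormedAlgebra ℚ (EuclideanSpace ℝ (Fin n) →L[ℝ] EuclideanSpace ℝ (Fin n)) :=
          .restrictScalars ℚ ℝ _
        exact NormedSpace.exp_continuous
    exact h2.comp ((continuous_const.sub continuous_id).smul continuous_const)
  obtain ⟨C, hC⟩ := (isCompact_Icc).exists_bound_of_continuousOn hc
  have hC0 : 0 ≤ C := le_trans (norm_nonneg _) (by
    simpa [Real.norm_eq_abs, abs_norm] using hC 0 ⟨le_refl 0, le_of_lt hT⟩)
  refine ⟨‖mCLM (Bᵀ)‖ * C * T, by positivity, fun z => ?_⟩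
  have hb : ∀ s ∈ Ioc (0:ℝ) T, ‖adjOut A B T z s‖ ≤ ‖mCLM (Bᵀ)‖ * C * ‖z‖ := by
    intro s hs
    rw [adjOut_eq]
    calc ‖mCLM Bᵀ (NormedSpace.exp ((T - s) • Matrix.toEuclideanCLM (𝕜 := ℝ) Aᵀ) z)‖
        ≤ ‖mCLM (Bᵀ)‖ * ‖NormedSpace.exp ((T - s) • Matrix.toEuclideanCLM (𝕜 := ℝ) Aᵀ) z‖ :=
          (mCLM Bᵀ).le_opNorm _
      _ ≤ ‖mCLM (Bᵀ)‖ * (‖NormedSpace.exp ((T - s) • Matrix.toEuclideanCLM (𝕜 := ℝ) Aᵀ)‖ * ‖z‖) := by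
          refine mul_le_mul_of_nonneg_left ?_ (norm_nonneg _)
          exact (NormedSpace.exp ((T - s) • Matrix.toEuclideanCLM (𝕜 := ℝ) Aᵀ)).le_opNorm _
      _ ≤ ‖mCLM (Bᵀ)‖ * (C * ‖z‖) := by
          refine mul_le_mul_of_nonneg_left ?_ (norm_nonneg _)
          refine mul_le_mul_of_nonneg_right ?_ (norm_nonneg _)
          have := hC s ⟨le_of_lt hs.1, hs.2⟩
          rwa [Real.norm_eq_abs, abs_norm] at this
      _ = ‖mCLM (Bᵀ)‖ * C * ‖z‖ := by ring
  calc JJ A B T z ≤ ∫ _ in Ioc (0:ℝ) T, ‖mCLM (Bᵀ)‖ * C * ‖z‖ :=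
        setIntegral_mono_on (integrableOn_norm_adjOut A B T z)
          (integrableOn_const measure_Ioc_lt_top.ne) measurableSet_Ioc hb
    _ = ‖mCLM (Bᵀ)‖ * C * T * ‖z‖ := by
        rw [setIntegral_const]
        rw [Measure.real, Real.volume_Ioc]
        rw [ENNReal.toReal_ofReal (by linarith)]
        simp [smul_eq_mul]; ring

lemma continuous_JJ (hT : 0 < T) : Continuous (JJ A B T) := by
  obtain ⟨K, hK0, hK⟩ := exists_JJ_bound A B T hT
  have key : ∀ z w : EuclideanSpace ℝ (Fin n), JJ A B T z - JJ A B T w ≤ K * ‖z - w‖ := by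
    intro z w
    have h1 : JJ A B T z ≤ JJ A B T w + JJ A B T (z - w) := by
      have := JJ_add_le A B T w (z - w)
      simpa using this
    have h2 := hK (z - w)
    linarith
  refine Metric.continuous_iff.2 fun z ε hε => ?_
  by_cases hK1 : K = 0
  · refine ⟨1, one_pos, fun w _ => ?_⟩
    have h1 := key w z
    have h2 := key z w
    rw [hK1, zero_mul] at h1 h2
    rw [Real.dist_eq]
    have : |JJ A B T w - JJ A B T z| ≤ 0 := abs_le.2 ⟨by linarith, by linarith⟩
    exact lt_of_le_of_lt this hε
  · have hKpos : 0 < K := lt_of_le_of_ne hK0 (Ne.symm hK1)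
    refine ⟨ε / K, by positivity, fun w hw => ?_⟩
    rw [Real.dist_eq]
    have h1 := key w z
    have h2 := key z w
    have h3 : ‖w - z‖ < ε / K := by rwa [dist_eq_norm] at hw
    have h4 : ‖z - w‖ = ‖w - z‖ := by rw [norm_sub_rev]
    have : |JJ A B T w - JJ A B T z| ≤ K * ‖w - z‖ :=
      abs_le.2 ⟨by rw [h4] at h2; linarith, by linarith⟩
    calc |JJ A B T w - JJ A B T z| ≤ K * ‖w - z‖ := this
      _ < K * (ε / K) := by exact mul_lt_mul_of_pos_left h3 hKpos
      _ = ε := by field_simp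

lemma orth_of_adjOut_zero_icc (hn : 1 ≤ n) (hT : 0 < T) (z : EuclideanSpace ℝ (Fin n))
    (h : ∀ t ∈ Icc (0:ℝ) T, adjOut A B T z t = 0) : z ∈ (reach A B)ᗮ := by
  set N := Matrix.toEuclideanCLM (𝕜 := ℝ) Aᵀ with hN
  have key : ∀ k : ℕ, ∀ s ∈ Icc (0:ℝ) T, mCLM Bᵀ ((N ^ k) (NormedSpace.exp (s • N) z)) = 0 := by
    intro k
    induction k with
    | zero =>
        intro s hs
        have h1 := h (T - s) ⟨by linarith [hs.2], by linarith [hs.1]⟩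
        rw [adjOut_eq, sub_sub_cancel] at h1
        simpa using h1
    | succ k ih =>
        have hioo : ∀ s ∈ Ioo (0:ℝ) T,
            mCLM Bᵀ ((N ^ (k+1)) (NormedSpace.exp (s • N) z)) = 0 := by
          intro s hs
          have hder := hasDerivAt_expApply N ((mCLM Bᵀ).comp (N ^ k)) z s
          have hev : (fun u : ℝ => ((mCLM Bᵀ).comp (N ^ k)) (NormedSpace.exp (u • N) z))
              =ᶠ[nhds s] (fun _ => (0 : EuclideanSpace ℝ (Fin m))) := by
            refine Filter.eventuallyEq_of_mem (isOpen_Ioo.mem_nhds hs) fun u hu => ?_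
            simpa using ih u (Ioo_subset_Icc_self hu)
          have hder2 := hder.congr_of_eventuallyEq hev.symm
          have hzero := hder2.unique (hasDerivAt_const s (0 : EuclideanSpace ℝ (Fin m)))
          have h5 : ((mCLM Bᵀ).comp (N ^ k)) (N (NormedSpace.exp (s • N) z)) = 0 := hzero
          have h6 : (N ^ k) (N (NormedSpace.exp (s • N) z))
              = (N ^ (k+1)) (NormedSpace.exp (s • N) z) := by
            rw [pow_succ, ContinuousLinearMap.mul_apply]
          simpa [h6] using h5
        intro s hs
        have hcont : Continuous
            (fun s : ℝ => ((mCLM Bᵀ).comp (N ^ (k+1))) (NormedSpace.exp (s • N) z)) :=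
          continuous_expApply' N ((mCLM Bᵀ).comp (N ^ (k+1))) z
        have heq : EqOn
            (fun s : ℝ => ((mCLM Bᵀ).comp (N ^ (k+1))) (NormedSpace.exp (s • N) z))
            (fun _ => (0 : EuclideanSpace ℝ (Fin m))) (closure (Ioo (0:ℝ) T)) := by
          refine Set.EqOn.closure ?_ hcont continuous_const
          intro u hu
          simpa using hioo u hu
        have h7 : s ∈ closure (Ioo (0:ℝ) T) := by
          rw [closure_Ioo (ne_of_lt hT)]; exact hs
        simpa using heq h7
  rw [mem_orth_iff A B hn]
  intro k
  have h8 := key k 0 ⟨le_refl 0, le_of_lt hT⟩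
  have h9 : (0:ℝ) • N = 0 := zero_smul ℝ N
  rw [h9, NormedSpace.exp_zero, ContinuousLinearMap.one_apply] at h8
  rw [← mCLM_apply, ← toEuclideanCLM_pow_apply]
  exact h8

lemma JJ_eq_zero_iff (hn : 1 ≤ n) (hT : 0 < T) (z : EuclideanSpace ℝ (Fin n)) :
    JJ A B T z = 0 ↔ z ∈ (reach A B)ᗮ := by
  constructor
  · intro hJ
    have hf : (fun s => ‖adjOut A B T z s‖) =ᵐ[volume.restrict (Ioc (0:ℝ) T)] 0 :=
      (integral_eq_zero_iff_of_nonneg (fun s => norm_nonneg _)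
        (integrableOn_norm_adjOut A B T z)).1 hJ
    have h2 : ∀ᵐ s ∂volume, s ∈ Ioc (0:ℝ) T → ‖adjOut A B T z s‖ = 0 := by
      have := (ae_restrict_iff' measurableSet_Ioc).1 hf
      filter_upwards [this] with s hs hmem
      exact hs hmem
    -- the open set where adjOut ≠ 0 intersected with Ioo is null, hence empty
    have hopen : IsOpen {s : ℝ | adjOut A B T z s ≠ 0} :=
      isOpen_compl_singleton.preimage (continuous_adjOut A B T z)
    have hU : IsOpen ({s : ℝ | adjOut A B T z s ≠ 0} ∩ Ioo 0 T) := hopen.inter isOpen_Ioo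
    have hnull : volume ({s : ℝ | adjOut A B T z s ≠ 0} ∩ Ioo 0 T) = 0 := by
      refine measure_mono_null ?_ (ae_iff.1 h2)
      intro s hs
      simp only [mem_setOf_eq, not_forall]
      exact ⟨Ioo_subset_Ioc_self hs.2, by simpa using hs.1⟩
    have hempty : {s : ℝ | adjOut A B T z s ≠ 0} ∩ Ioo 0 T = ∅ := by
      by_contra hne
      have := hU.measure_pos volume (nonempty_iff_ne_empty.2 hne)
      rw [hnull] at this
      exact lt_irrefl 0 this
    have hioo : ∀ u ∈ Ioo (0:ℝ) T, adjOut A B T z u = 0 := by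
      intro u hu
      by_contra hne
      have hmem : u ∈ ({s : ℝ | adjOut A B T z s ≠ 0} ∩ Ioo 0 T) := ⟨hne, hu⟩
      rw [hempty] at hmem
      exact absurd hmem (notMem_empty u)
    refine orth_of_adjOut_zero_icc A B T hn hT z fun t ht => ?_
    have heq : EqOn (fun t => adjOut A B T z t) (fun _ => (0 : EuclideanSpace ℝ (Fin m)))
        (closure (Ioo (0:ℝ) T)) :=
      Set.EqOn.closure (fun u hu => hioo u hu) (continuous_adjOut A B T z) continuous_const
    have h7 : t ∈ closure (Ioo (0:ℝ) T) := by
      rw [closure_Ioo (ne_of_lt hT)]; exact ht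
    exact heq h7
  · intro hz
    unfold JJ
    have : ∀ s, ‖adjOut A B T z s‖ = 0 := fun s => by
      rw [adjOut_eq_zero_of_orth A B hn T hz s, norm_zero]
    simp only [this, integral_zero]

end JFacts


section SupNormFacts

variable {m : ℕ} (T : ℝ)

lemma restrict_Ioo_eq_Ioc :
    (volume : Measure ℝ).restrict (Ioo (0:ℝ) T) = volume.restrict (Ioc (0:ℝ) T) :=
  Measure.restrict_congr_set Ioo_ae_eq_Ioc

lemma ae_norm_le_supNorm (v : ℝ → EuclideanSpace ℝ (Fin m)) (hb : supNorm T v ≠ ⊤) :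
    ∀ᵐ s ∂(volume.restrict (Ioo (0:ℝ) T)), ‖v s‖ ≤ (supNorm T v).toReal := by
  have h := enorm_ae_le_eLpNormEssSup v (volume.restrict (Ioo (0:ℝ) T))
  have hsup : supNorm T v = eLpNormEssSup v (volume.restrict (Ioo (0:ℝ) T)) := by
    rw [supNorm, eLpNorm_exponent_top]
  filter_upwards [h] with s hs
  have h2 : ((‖v s‖₊ : ℝ≥0∞)).toReal ≤ (supNorm T v).toReal := by
    refine ENNReal.toReal_mono hb ?_
    rw [hsup]; exact hs
  simpa using h2

lemma supNorm_le_of_ae (v : ℝ → EuclideanSpace ℝ (Fin m)) (c : ℝ)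
    (h : ∀ᵐ s ∂(volume.restrict (Ioo (0:ℝ) T)), ‖v s‖ ≤ c) :
    supNorm T v ≤ ENNReal.ofReal c := by
  have hsup : supNorm T v = eLpNormEssSup v (volume.restrict (Ioo (0:ℝ) T)) := by
    rw [supNorm, eLpNorm_exponent_top]
  rw [hsup]
  exact eLpNormEssSup_le_of_ae_bound h

lemma supNorm_eq_of_ae (hT : 0 < T) (v : ℝ → EuclideanSpace ℝ (Fin m)) (c : ℝ) (hc : 0 ≤ c)
    (h : ∀ᵐ s ∂(volume.restrict (Ioo (0:ℝ) T)), ‖v s‖ = c) :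
    supNorm T v = ENNReal.ofReal c := by
  refine le_antisymm (supNorm_le_of_ae T v c (by filter_upwards [h] with s hs; rw [hs])) ?_
  have hne : volume.restrict (Ioo (0:ℝ) T) ≠ 0 := by
    intro hcontra
    rw [Measure.restrict_eq_zero, Real.volume_Ioo] at hcontra
    simp only [sub_zero, ENNReal.ofReal_eq_zero] at hcontra
    linarith
  have hsup : supNorm T v = eLpNormEssSup v (volume.restrict (Ioo (0:ℝ) T)) := by
    rw [supNorm, eLpNorm_exponent_top]
  have hcongr : (fun s => ‖v s‖ₑ) =ᵐ[volume.restrict (Ioo (0:ℝ) T)]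
      (fun _ => ENNReal.ofReal c) := by
    filter_upwards [h] with s hs
    rw [← hs, ofReal_norm]
  rw [hsup]
  unfold eLpNormEssSup
  rw [essSup_congr_ae hcongr, essSup_const _ hne]

end SupNormFacts

section IntegralIdentity

variable {n m : ℕ} (A : Matrix (Fin n) (Fin n) ℝ) (B : Matrix (Fin n) (Fin m) ℝ) (T : ℝ)

/-- The integrand of `reachOutput`. -/
def kerF (v : ℝ → EuclideanSpace ℝ (Fin m)) (s : ℝ) : EuclideanSpace ℝ (Fin n) :=
  mulVecE (NormedSpace.exp ((T - s) • A)) (mulVecE B (v s))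

lemma reachOutput_eq (v : ℝ → EuclideanSpace ℝ (Fin m)) :
    reachOutput A B T v = ∫ s in Ioc (0:ℝ) T, kerF A B T v s := rfl

lemma kerF_eq (v : ℝ → EuclideanSpace ℝ (Fin m)) (s : ℝ) :
    kerF A B T v s = ((NormedSpace.exp ((T - s) • Matrix.toEuclideanCLM (𝕜 := ℝ) A)).comp
      (mCLM B)) (v s) := by
  rw [kerF, expE]; rfl

lemma continuous_Phi : Continuous (fun s : ℝ =>
    (NormedSpace.exp ((T - s) • Matrix.toEuclideanCLM (𝕜 := ℝ) A)).comp (mCLM B)) := by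
  have h2 : Continuous (fun M : EuclideanSpace ℝ (Fin n) →L[ℝ] EuclideanSpace ℝ (Fin n)
      => NormedSpace.exp M) := by
        letI : NormedAlgebra ℚ (EuclideanSpace ℝ (Fin n) →L[ℝ] EuclideanSpace ℝ (Fin n)) :=
          .restrictScalars ℚ ℝ _
        exact NormedSpace.exp_continuous
  exact (h2.comp ((continuous_const.sub continuous_id).smul continuous_const)).clm_comp
    continuous_const

lemma measurable_kerF {v : ℝ → EuclideanSpace ℝ (Fin m)} (hv : Measurable v) :
    Measurable (kerF A B T v) := by
  have heq : kerF A B T v = fun s => ((NormedSpace.exp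
      ((T - s) • Matrix.toEuclideanCLM (𝕜 := ℝ) A)).comp (mCLM B)) (v s) :=
    funext fun s => kerF_eq A B T v s
  rw [heq]
  have hc : Continuous (fun p : (EuclideanSpace ℝ (Fin m) →L[ℝ] EuclideanSpace ℝ (Fin n))
      × EuclideanSpace ℝ (Fin m) => p.1 p.2) := isBoundedBilinearMap_apply.continuous
  have hpair : Measurable (fun s : ℝ =>
      (((NormedSpace.exp ((T - s) • Matrix.toEuclideanCLM (𝕜 := ℝ) A)).comp (mCLM B)), v s)) :=
    ((continuous_Phi A B T).measurable).prodMk hv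
  exact hc.measurable.comp hpair

lemma exists_Phi_bound : ∃ C : ℝ, 0 ≤ C ∧ ∀ s ∈ Icc (0:ℝ) T,
    ‖(NormedSpace.exp ((T - s) • Matrix.toEuclideanCLM (𝕜 := ℝ) A)).comp (mCLM B)‖ ≤ C := by
  obtain ⟨C, hC⟩ := (isCompact_Icc (a := (0:ℝ)) (b := T)).exists_bound_of_continuousOn
    ((continuous_Phi A B T).norm.continuousOn)
  refine ⟨max C 0, le_max_right _ _, fun s hs => ?_⟩
  have := hC s hs
  rw [Real.norm_eq_abs, abs_norm] at this
  exact le_trans this (le_max_left _ _)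

lemma integrableOn_kerF (hT : 0 < T) {v : ℝ → EuclideanSpace ℝ (Fin m)}
    (hv : Measurable v) (hb : supNorm T v ≠ ⊤) :
    IntegrableOn (kerF A B T v) (Ioc (0:ℝ) T) volume := by
  obtain ⟨C, hC0, hC⟩ := exists_Phi_bound A B T
  have hae : ∀ᵐ s ∂(volume.restrict (Ioc (0:ℝ) T)), ‖v s‖ ≤ (supNorm T v).toReal := by
    rw [← restrict_Ioo_eq_Ioc]
    exact ae_norm_le_supNorm T v hb
  have haemem : ∀ᵐ s ∂(volume.restrict (Ioc (0:ℝ) T)), s ∈ Ioc (0:ℝ) T :=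
    ae_restrict_mem measurableSet_Ioc
  refine Integrable.mono' (g := fun _ => C * (supNorm T v).toReal)
    (integrableOn_const measure_Ioc_lt_top.ne)
    ((measurable_kerF A B T hv).aestronglyMeasurable) ?_
  filter_upwards [hae, haemem] with s hs hmem
  rw [kerF_eq]
  calc ‖((NormedSpace.exp ((T - s) • Matrix.toEuclideanCLM (𝕜 := ℝ) A)).comp (mCLM B)) (v s)‖
      ≤ ‖(NormedSpace.exp ((T - s) • Matrix.toEuclideanCLM (𝕜 := ℝ) A)).comp (mCLM B)‖ * ‖v s‖ :=
        ContinuousLinearMap.le_opNorm _ _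
    _ ≤ C * (supNorm T v).toReal := by
        refine mul_le_mul (hC s ⟨le_of_lt hmem.1, hmem.2⟩) hs (norm_nonneg _) hC0

lemma inner_reachOutput (hT : 0 < T) {v : ℝ → EuclideanSpace ℝ (Fin m)}
    (hv : Measurable v) (hb : supNorm T v ≠ ⊤) (z : EuclideanSpace ℝ (Fin n)) :
    ⟪reachOutput A B T v, z⟫ = ∫ s in Ioc (0:ℝ) T, ⟪v s, adjOut A B T z s⟫ := by
  have h1 := integral_inner (𝕜 := ℝ) (integrableOn_kerF A B T hT hv hb) z
  calc ⟪reachOutput A B T v, z⟫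
      = ⟪z, ∫ s in Ioc (0:ℝ) T, kerF A B T v s⟫ := by
        rw [reachOutput_eq]; exact real_inner_comm _ _
    _ = ∫ s in Ioc (0:ℝ) T, ⟪z, kerF A B T v s⟫ := h1.symm
    _ = ∫ s in Ioc (0:ℝ) T, ⟪v s, adjOut A B T z s⟫ :=
        integral_congr_ae (Filter.Eventually.of_forall fun s =>
          (real_inner_comm _ _).trans (inner_kernel_adjOut A B T (v s) z s))

end IntegralIdentity

section AeNonzero

variable {n m : ℕ} (A : Matrix (Fin n) (Fin n) ℝ) (B : Matrix (Fin n) (Fin m) ℝ) (T : ℝ)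

lemma ae_adjOut_ne_zero (hT : 0 < T) (z : EuclideanSpace ℝ (Fin n))
    (hJ : JJ A B T z ≠ 0) :
    ∀ᵐ s ∂(volume.restrict (Ioc (0:ℝ) T)), adjOut A B T z s ≠ 0 := by
  set Z := {s : ℝ | adjOut A B T z s = 0} with hZ
  have hZc : IsClosed Z := isClosed_singleton.preimage (continuous_adjOut A B T z)
  rw [MeasureTheory.ae_iff]
  have hset : {s : ℝ | ¬ adjOut A B T z s ≠ 0} = Z := by
    ext s; simp [hZ]
  rw [hset, Measure.restrict_apply hZc.measurableSet]
  by_contra hpos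
  obtain ⟨t₀, ht₀S, ht₀⟩ := MeasureTheory.exists_mem_forall_mem_nhdsWithin_pos_measure
    (μ := (volume : Measure ℝ)) (s := Z ∩ Ioc 0 T) hpos
  have hfreq : ∃ᶠ s in nhdsWithin t₀ {t₀}ᶜ, adjOut A B T z s = 0 := by
    rw [Filter.frequently_iff]
    intro U hU
    obtain ⟨V, hVopen, ht₀V, hVsub⟩ := mem_nhdsWithin.1 hU
    have hmemV : (Z ∩ Ioc 0 T) ∩ V ∈ nhdsWithin t₀ (Z ∩ Ioc 0 T) :=
      inter_mem_nhdsWithin _ (hVopen.mem_nhds ht₀V)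
    have hpos2 : 0 < volume ((Z ∩ Ioc 0 T) ∩ V) := ht₀ _ hmemV
    have hpos3 : 0 < volume (((Z ∩ Ioc 0 T) ∩ V) \ {t₀}) := by
      rwa [measure_diff_null (measure_singleton t₀)]
    obtain ⟨s, hs⟩ := nonempty_of_measure_ne_zero (ne_of_gt hpos3)
    refine ⟨s, hVsub ⟨hs.1.2, hs.2⟩, hs.1.1.1⟩
  have hzero := (analyticOnNhd_adjOut A B T z).eqOn_zero_of_preconnected_of_frequently_eq_zero
    isPreconnected_univ (mem_univ t₀) hfreq
  refine hJ ?_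
  unfold JJ
  have hz0 : ∀ s : ℝ, ‖adjOut A B T z s‖ = 0 := fun s => by
    have := hzero (mem_univ s)
    simp only [Pi.zero_apply] at this
    rw [this, norm_zero]
  simp only [hz0, integral_zero]

end AeNonzero


section DerivJ

variable {n m : ℕ} (A : Matrix (Fin n) (Fin n) ℝ) (B : Matrix (Fin n) (Fin m) ℝ) (T : ℝ)

lemma norm_line_hasDerivAt {d : ℕ} (a b : EuclideanSpace ℝ (Fin d)) (ha : a ≠ 0) :
    HasDerivAt (fun ε : ℝ => ‖a + ε • b‖) (⟪a, b⟫ / ‖a‖) 0 := by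
  have hp : HasDerivAt (fun ε : ℝ => ‖a‖^2 + ε * (2 * ⟪a, b⟫) + ε^2 * ‖b‖^2)
      (2 * ⟪a, b⟫) 0 := by
    have h1 : HasDerivAt (fun ε : ℝ => ε * (2 * ⟪a, b⟫)) (2 * ⟪a, b⟫) 0 :=
      hasDerivAt_mul_const _
    have h2 : HasDerivAt (fun ε : ℝ => ε^2 * ‖b‖^2) (0 : ℝ) 0 := by
      have h3 := (hasDerivAt_pow 2 (0:ℝ)).mul_const (‖b‖^2)
      simpa using h3
    have h4 := ((hasDerivAt_const (0:ℝ) (‖a‖^2)).add h1).add h2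
    exact h4.congr_deriv (by ring)
  have hpz : ‖a‖^2 + 0 * (2 * ⟪a, b⟫) + 0^2 * ‖b‖^2 ≠ 0 := by
    have hna : ‖a‖ ≠ 0 := norm_ne_zero_iff.2 ha
    simp only [zero_mul, add_zero, ne_eq, pow_eq_zero_iff, OfNat.ofNat_ne_zero,
      not_false_eq_true]
    positivity
  have hs := hp.sqrt hpz
  have heq : (fun ε : ℝ => Real.sqrt (‖a‖^2 + ε * (2 * ⟪a, b⟫) + ε^2 * ‖b‖^2))
      = (fun ε : ℝ => ‖a + ε • b‖) := by
    funext ε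
    have hsq : ‖a + ε • b‖^2 = ‖a‖^2 + ε * (2 * ⟪a, b⟫) + ε^2 * ‖b‖^2 := by
      rw [norm_add_sq_real, real_inner_smul_right, norm_smul, Real.norm_eq_abs,
        mul_pow, sq_abs]
      ring
    rw [← hsq, Real.sqrt_sq (norm_nonneg _)]
  rw [heq] at hs
  convert hs using 1
  have h5 : ‖a‖^2 + 0 * (2 * ⟪a, b⟫) + 0^2 * ‖b‖^2 = ‖a‖^2 := by ring
  rw [h5, Real.sqrt_sq (norm_nonneg a)]
  have hna : ‖a‖ ≠ 0 := norm_ne_zero_iff.2 ha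
  field_simp

lemma hasDerivAt_JJ_line (hT : 0 < T) (zs w : EuclideanSpace ℝ (Fin n))
    (hae : ∀ᵐ s ∂(volume.restrict (Ioc (0:ℝ) T)), adjOut A B T zs s ≠ 0) :
    HasDerivAt (fun ε : ℝ => JJ A B T (zs + ε • w))
      (∫ s in Ioc (0:ℝ) T, ⟪adjOut A B T zs s, adjOut A B T w s⟫ / ‖adjOut A B T zs s‖) 0 := by
  rw [hasDerivAt_iff_tendsto_slope]
  have key : Filter.Tendsto (fun ε : ℝ => ∫ s in Ioc (0:ℝ) T,
      (‖adjOut A B T zs s + ε • adjOut A B T w s‖ - ‖adjOut A B T zs s‖) / ε)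
      (nhdsWithin 0 {(0:ℝ)}ᶜ)
      (nhds (∫ s in Ioc (0:ℝ) T,
        ⟪adjOut A B T zs s, adjOut A B T w s⟫ / ‖adjOut A B T zs s‖)) := by
    refine tendsto_integral_filter_of_dominated_convergence
      (fun s => ‖adjOut A B T w s‖) ?_ ?_ (integrableOn_norm_adjOut A B T w) ?_
    · refine Filter.Eventually.of_forall fun ε => Continuous.aestronglyMeasurable ?_
      exact ((((continuous_adjOut A B T zs).add
        ((continuous_adjOut A B T w).const_smul ε)).norm.sub
        (continuous_adjOut A B T zs).norm).div_const ε)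
    · refine Filter.eventually_of_mem self_mem_nhdsWithin fun ε hε => ?_
      refine Filter.Eventually.of_forall fun s => ?_
      have hε0 : (ε : ℝ) ≠ 0 := hε
      have h1 : |‖adjOut A B T zs s + ε • adjOut A B T w s‖ - ‖adjOut A B T zs s‖|
          ≤ |ε| * ‖adjOut A B T w s‖ := by
        have h2 := abs_norm_sub_norm_le (adjOut A B T zs s + ε • adjOut A B T w s)
          (adjOut A B T zs s)
        rw [add_sub_cancel_left, norm_smul, Real.norm_eq_abs] at h2
        exact h2
      rw [Real.norm_eq_abs, abs_div]
      rw [div_le_iff₀ (abs_pos.2 hε0)]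
      calc |‖adjOut A B T zs s + ε • adjOut A B T w s‖ - ‖adjOut A B T zs s‖|
          ≤ |ε| * ‖adjOut A B T w s‖ := h1
        _ = ‖adjOut A B T w s‖ * |ε| := by ring
    · filter_upwards [hae] with s hs
      have hd := norm_line_hasDerivAt (adjOut A B T zs s) (adjOut A B T w s) hs
      rw [hasDerivAt_iff_tendsto_slope] at hd
      refine hd.congr' ?_
      refine Filter.eventually_of_mem self_mem_nhdsWithin fun ε hε => ?_
      have : slope (fun ε : ℝ => ‖adjOut A B T zs s + ε • adjOut A B T w s‖) 0 ε
          = (‖adjOut A B T zs s + ε • adjOut A B T w s‖ - ‖adjOut A B T zs s‖) / ε := by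
        rw [slope_def_field]
        simp [sub_zero]
      rw [this]
  refine Filter.Tendsto.congr' ?_ key
  refine Filter.eventually_of_mem self_mem_nhdsWithin fun ε hε => ?_
  have hε0 : (ε : ℝ) ≠ 0 := hε
  have hJ1 : JJ A B T (zs + ε • w)
      = ∫ s in Ioc (0:ℝ) T, ‖adjOut A B T zs s + ε • adjOut A B T w s‖ := by
    unfold JJ
    refine integral_congr_ae (Filter.Eventually.of_forall fun s => ?_)
    simp only [adjOut_add, adjOut_smul]
  have hint1 : IntegrableOn
      (fun s => ‖adjOut A B T zs s + ε • adjOut A B T w s‖) (Ioc (0:ℝ) T) volume := by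
    have hi := integrableOn_norm_adjOut A B T (zs + ε • w)
    refine hi.congr_fun ?_ measurableSet_Ioc
    intro s _
    simp only [adjOut_add, adjOut_smul]
  have hJ0 : JJ A B T (zs + (0:ℝ) • w) = ∫ s in Ioc (0:ℝ) T, ‖adjOut A B T zs s‖ := by
    rw [zero_smul, add_zero]; rfl
  rw [slope_def_field, hJ1, hJ0, sub_zero]
  rw [← integral_sub hint1 (integrableOn_norm_adjOut A B T zs), ← integral_div]

end DerivJ

section DualExists

variable {n m : ℕ} (A : Matrix (Fin n) (Fin n) ℝ) (B : Matrix (Fin n) (Fin m) ℝ) (T : ℝ)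

lemma exists_dual (hn : 1 ≤ n) (hT : 0 < T) (x : EuclideanSpace ℝ (Fin n))
    (hxR : x ∈ reach A B) (hx0 : x ≠ 0) :
    ∃ zs : EuclideanSpace ℝ (Fin n), zs ∈ reach A B ∧ JJ A B T zs = 1 ∧ 0 < ⟪x, zs⟫ ∧
      ∀ z : EuclideanSpace ℝ (Fin n), ⟪x, z⟫ ≤ ⟪x, zs⟫ * JJ A B T z := by
  have hJx : 0 < JJ A B T x := by
    rcases lt_or_eq_of_le (JJ_nonneg A B T x) with h | h
    · exact h
    · exfalso
      have hx_orth : x ∈ (reach A B)ᗮ := (JJ_eq_zero_iff A B T hn hT x).1 h.symm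
      have := (Submodule.mem_orthogonal _ x).1 hx_orth x hxR
      rw [real_inner_self_eq_norm_sq] at this
      exact hx0 (by
        have := pow_eq_zero_iff (n := 2) (by norm_num) |>.1 (by linarith [this] : ‖x‖^2 = 0)
        exact norm_eq_zero.1 this)
  set K : Set (EuclideanSpace ℝ (Fin n)) :=
    {z | z ∈ reach A B ∧ JJ A B T z = 1} with hK
  have hKclosed : IsClosed K := by
    have h1 : IsClosed ((reach A B : Set (EuclideanSpace ℝ (Fin n)))) :=
      Submodule.closed_of_finiteDimensional _
    have h2 : IsClosed {z : EuclideanSpace ℝ (Fin n) | JJ A B T z = 1} :=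
      isClosed_eq (continuous_JJ A B T hT) continuous_const
    exact h1.inter h2
  -- K is bounded
  have hSne : ((Metric.sphere (0 : EuclideanSpace ℝ (Fin n)) 1) ∩ reach A B).Nonempty := by
    refine ⟨‖x‖⁻¹ • x, ?_, Submodule.smul_mem _ _ hxR⟩
    simp [norm_smul, abs_of_nonneg (inv_nonneg.2 (norm_nonneg x)),
      inv_mul_cancel₀ (norm_ne_zero_iff.2 hx0)]
  have hScpt : IsCompact ((Metric.sphere (0 : EuclideanSpace ℝ (Fin n)) 1) ∩ reach A B) :=
    (isCompact_sphere _ _).inter_right (Submodule.closed_of_finiteDimensional _)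
  obtain ⟨z₁, hz₁mem, hz₁min⟩ := hScpt.exists_isMinOn hSne (continuous_JJ A B T hT).continuousOn
  have hc₀pos : 0 < JJ A B T z₁ := by
    rcases lt_or_eq_of_le (JJ_nonneg A B T z₁) with h | h
    · exact h
    · exfalso
      have hz₁orth : z₁ ∈ (reach A B)ᗮ := (JJ_eq_zero_iff A B T hn hT z₁).1 h.symm
      have h3 := (Submodule.mem_orthogonal _ z₁).1 hz₁orth z₁ hz₁mem.2
      rw [real_inner_self_eq_norm_sq] at h3
      have h4 : ‖z₁‖ = 1 := by simpa using hz₁mem.1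
      rw [h4] at h3; norm_num at h3
  have hKbdd : Bornology.IsBounded K := by
    rw [Metric.isBounded_iff_subset_closedBall 0]
    refine ⟨(JJ A B T z₁)⁻¹, fun z hz => ?_⟩
    rw [Metric.mem_closedBall, dist_zero_right]
    by_cases hz0 : z = 0
    · rw [hz0, norm_zero]; positivity
    · have hnz : ‖z‖ ≠ 0 := norm_ne_zero_iff.2 hz0
      have hm : ‖z‖⁻¹ • z ∈ (Metric.sphere (0 : EuclideanSpace ℝ (Fin n)) 1) ∩ reach A B := by
        constructor
        · simp [norm_smul, abs_of_nonneg (inv_nonneg.2 (norm_nonneg z)),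
            inv_mul_cancel₀ hnz]
        · exact Submodule.smul_mem _ _ hz.1
      have h5 : JJ A B T z₁ ≤ JJ A B T (‖z‖⁻¹ • z) := hz₁min hm
      have h6 : JJ A B T (‖z‖⁻¹ • z) = ‖z‖⁻¹ * JJ A B T z := by
        rw [JJ_smul, abs_of_nonneg (inv_nonneg.2 (norm_nonneg z))]
      have h7 : JJ A B T z = 1 := hz.2
      rw [h6, h7, mul_one] at h5
      -- h5 : JJ z₁ ≤ ‖z‖⁻¹
      rw [← inv_inv ‖z‖]
      exact inv_anti₀ hc₀pos h5
  have hKcpt : IsCompact K := Metric.isCompact_of_isClosed_isBounded hKclosed hKbdd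
  have hKne : K.Nonempty := by
    refine ⟨(JJ A B T x)⁻¹ • x, Submodule.smul_mem _ _ hxR, ?_⟩
    rw [JJ_smul, abs_of_nonneg (inv_nonneg.2 (le_of_lt hJx)), inv_mul_cancel₀ (ne_of_gt hJx)]
  obtain ⟨zs, hzsK, hzsmax⟩ := hKcpt.exists_isMaxOn hKne
    ((continuous_const.inner continuous_id).continuousOn :
      ContinuousOn (fun z : EuclideanSpace ℝ (Fin n) => ⟪x, z⟫) K)
  refine ⟨zs, hzsK.1, hzsK.2, ?_, ?_⟩
  · have hxK : (JJ A B T x)⁻¹ • x ∈ K :=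
      ⟨Submodule.smul_mem _ _ hxR, by
        rw [JJ_smul, abs_of_nonneg (inv_nonneg.2 hJx.le), inv_mul_cancel₀ (ne_of_gt hJx)]⟩
    have h8 : ⟪x, (JJ A B T x)⁻¹ • x⟫ ≤ ⟪x, zs⟫ := hzsmax hxK
    have h9 : 0 < ⟪x, (JJ A B T x)⁻¹ • x⟫ := by
      rw [real_inner_smul_right, real_inner_self_eq_norm_sq]
      exact mul_pos (inv_pos.2 hJx) (pow_pos (norm_pos_iff.2 hx0) 2)
    linarith
  · intro z
    set u := (((reach A B).orthogonalProjectionOnto z : EuclideanSpace ℝ (Fin n))) with hu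
    have huR : u ∈ reach A B := ((reach A B).orthogonalProjectionOnto z).2
    have hzu : z - u ∈ (reach A B)ᗮ := Submodule.sub_starProjection_mem_orthogonal (K := reach A B) z
    have hxz : ⟪x, z⟫ = ⟪x, u⟫ := by
      have h0 : ⟪x, z - u⟫ = 0 := (Submodule.mem_orthogonal _ _).1 hzu x hxR
      have h1 : ⟪x, z⟫ - ⟪x, u⟫ = 0 := by rw [← inner_sub_right]; exact h0
      linarith
    have hJzu : JJ A B T z = JJ A B T u := by
      unfold JJ
      refine integral_congr_ae (Filter.Eventually.of_forall fun s => ?_)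
      have hdecomp : z = u + (z - u) := by abel
      have h2 : adjOut A B T z s = adjOut A B T u s := by
        conv_lhs => rw [hdecomp]
        rw [adjOut_add, adjOut_eq_zero_of_orth A B hn T hzu s, add_zero]
      simp only [h2]
    by_cases hJu : JJ A B T u = 0
    · have hu_orth : u ∈ (reach A B)ᗮ := (JJ_eq_zero_iff A B T hn hT u).1 hJu
      have hu0 : u = 0 := by
        have h3 := (Submodule.mem_orthogonal _ u).1 hu_orth u huR
        rw [real_inner_self_eq_norm_sq] at h3
        have h4 : ‖u‖ ^ 2 = 0 := by linarith [h3]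
        have h5 : ‖u‖ = 0 := by
          nlinarith [norm_nonneg u]
        exact norm_eq_zero.1 h5
      rw [hxz, hu0, inner_zero_right, hJzu, hJu, mul_zero]
    · have hJupos : 0 < JJ A B T u := lt_of_le_of_ne (JJ_nonneg A B T u) (Ne.symm hJu)
      have humem : (JJ A B T u)⁻¹ • u ∈ K :=
        ⟨Submodule.smul_mem _ _ huR, by
          rw [JJ_smul, abs_of_nonneg (inv_nonneg.2 hJupos.le),
            inv_mul_cancel₀ (ne_of_gt hJupos)]⟩
      have h8 : ⟪x, (JJ A B T u)⁻¹ • u⟫ ≤ ⟪x, zs⟫ := hzsmax humem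
      rw [real_inner_smul_right] at h8
      have h10 := mul_le_mul_of_nonneg_left h8 hJupos.le
      rw [← mul_assoc, mul_inv_cancel₀ (ne_of_gt hJupos), one_mul] at h10
      rw [hxz, hJzu]
      nlinarith [h10]

end DualExists

/-- Let `y₀ ∈ ℛ \ {0}` and `T ∈ (0,∞)`.  Then `(NP)^{T,y₀}` has at least
one minimal norm control, and there is `z ∈ ℝⁿ` such that `t ↦ B^⊤ e^{(T-t)A^⊤} z` is
nonzero for a.e. `t ∈ (0,T)` and every minimal norm control `v*` of `(NP)^{T,y₀}` satisfies
`⟨v*(t), B^⊤ e^{(T-t)A^⊤} z⟩ = N(T,y₀) ‖B^⊤ e^{(T-t)A^⊤} z‖` for a.e. `t ∈ (0,T)`. -/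
theorem statement13 {n m : ℕ} (hn : 1 ≤ n) (hm : 1 ≤ m)
    (A : Matrix (Fin n) (Fin n) ℝ) (B : Matrix (Fin n) (Fin m) ℝ) (hB : B ≠ 0)
    (y0 : EuclideanSpace ℝ (Fin n)) (hy0R : y0 ∈ reach A B) (hy0 : y0 ≠ 0)
    (T : ℝ) (hT : 0 < T) :
    (∃ v, IsMinNormControl A B T y0 v) ∧
    ∃ z : EuclideanSpace ℝ (Fin n),
      (∀ᵐ t ∂(volume.restrict (Ioo (0 : ℝ) T)), adjOut A B T z t ≠ 0) ∧
      ∀ v : ℝ → EuclideanSpace ℝ (Fin m), IsMinNormControl A B T y0 v →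
        ∀ᵐ t ∂(volume.restrict (Ioo (0 : ℝ) T)),
          ⟪v t, adjOut A B T z t⟫ = (Nmin A B T y0).toReal * ‖adjOut A B T z t‖ := by
  classical
  set x : EuclideanSpace ℝ (Fin n) := -(mulVecE (NormedSpace.exp (T • A)) y0) with hxdef
  have hxR : x ∈ reach A B := Submodule.neg_mem _ (exp_mem_reach A B hn T hy0R)
  have hx0 : x ≠ 0 := by
    intro hx
    have h1 : mulVecE (NormedSpace.exp (T • A)) y0 = 0 := by
      have h2 := congrArg Neg.neg hx
      simpa [hxdef] using h2
    have h2 : NormedSpace.exp ((-T) • A) * NormedSpace.exp (T • A) = 1 := by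
      rw [← Matrix.exp_add_of_commute _ _ (((Commute.refl A).smul_left (-T)).smul_right T)]
      have h3 : (-T) • A + T • A = (0 : Matrix (Fin n) (Fin n) ℝ) := by
        rw [← add_smul]; simp
      rw [h3, NormedSpace.exp_zero]
    have h3 : y0 = 0 := by
      have h4 := congrArg (fun w => mulVecE (NormedSpace.exp ((-T) • A)) w) h1
      simp only [← mulVecE_mul, h2, mulVecE_one, mulVecE_zero] at h4
      exact h4
    exact hy0 h3
  obtain ⟨zs, hzsR, hzsJ, hNpos, hglobal⟩ := exists_dual A B T hn hT x hxR hx0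
  set Nval : ℝ := ⟪x, zs⟫ with hNval
  have haeIoc : ∀ᵐ s ∂(volume.restrict (Ioc (0:ℝ) T)), adjOut A B T zs s ≠ 0 :=
    ae_adjOut_ne_zero A B T hT zs (by rw [hzsJ]; norm_num)
  have haeIoo : ∀ᵐ s ∂(volume.restrict (Ioo (0:ℝ) T)), adjOut A B T zs s ≠ 0 := by
    rw [restrict_Ioo_eq_Ioc]; exact haeIoc
  set vstar : ℝ → EuclideanSpace ℝ (Fin m) :=
    fun s => Nval • (‖adjOut A B T zs s‖⁻¹ • adjOut A B T zs s) with hvstar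
  have hvmeas : Measurable vstar := by
    have h1 : Measurable fun s => adjOut A B T zs s := (continuous_adjOut A B T zs).measurable
    exact ((measurable_const (a := Nval)).smul ((h1.norm.inv).smul h1))
  have hvnorm_le : ∀ s, ‖vstar s‖ ≤ Nval := by
    intro s
    rw [hvstar]
    simp only [norm_smul, Real.norm_eq_abs, abs_of_nonneg hNpos.le,
      abs_of_nonneg (inv_nonneg.2 (norm_nonneg (adjOut A B T zs s)))]
    by_cases h : adjOut A B T zs s = 0
    · simp [h, hNpos.le]
    · rw [inv_mul_cancel₀ (norm_ne_zero_iff.2 h), mul_one]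
  have hvnorm_eq : ∀ s, adjOut A B T zs s ≠ 0 → ‖vstar s‖ = Nval := by
    intro s h
    rw [hvstar]
    simp only [norm_smul, Real.norm_eq_abs, abs_of_nonneg hNpos.le,
      abs_of_nonneg (inv_nonneg.2 (norm_nonneg (adjOut A B T zs s)))]
    rw [inv_mul_cancel₀ (norm_ne_zero_iff.2 h), mul_one]
  have hsup_eq : supNorm T vstar = ENNReal.ofReal Nval := by
    refine supNorm_eq_of_ae T hT vstar Nval hNpos.le ?_
    filter_upwards [haeIoo] with s hs
    exact hvnorm_eq s hs
  have hsupne : supNorm T vstar ≠ ⊤ := by rw [hsup_eq]; exact ENNReal.ofReal_ne_top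
  have hDw : ∀ w : EuclideanSpace ℝ (Fin n),
      Nval * (∫ s in Ioc (0:ℝ) T,
        ⟪adjOut A B T zs s, adjOut A B T w s⟫ / ‖adjOut A B T zs s‖) = ⟪x, w⟫ := by
    intro w
    have hder1 := hasDerivAt_JJ_line A B T hT zs w haeIoc
    have hder2 : HasDerivAt (fun ε : ℝ => Nval * JJ A B T (zs + ε • w) - ⟪x, zs + ε • w⟫)
        (Nval * (∫ s in Ioc (0:ℝ) T,
          ⟪adjOut A B T zs s, adjOut A B T w s⟫ / ‖adjOut A B T zs s‖) - ⟪x, w⟫) 0 := by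
      refine HasDerivAt.sub (hder1.const_mul Nval) ?_
      have h5 : (fun ε : ℝ => ⟪x, zs + ε • w⟫) = fun ε => ⟪x, zs⟫ + ε * ⟪x, w⟫ := by
        funext ε; rw [inner_add_right, real_inner_smul_right]
      rw [h5]
      simpa using ((hasDerivAt_mul_const ⟪x, w⟫)).const_add ⟪x, zs⟫
    have hmin : IsLocalMin (fun ε : ℝ => Nval * JJ A B T (zs + ε • w) - ⟪x, zs + ε • w⟫) 0 := by
      refine Filter.Eventually.of_forall fun ε => ?_
      have h0 : Nval * JJ A B T (zs + (0:ℝ) • w) - ⟪x, zs + (0:ℝ) • w⟫ = 0 := by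
        rw [zero_smul, add_zero, hzsJ, mul_one, ← hNval]; ring
      show Nval * JJ A B T (zs + (0:ℝ) • w) - ⟪x, zs + (0:ℝ) • w⟫
        ≤ Nval * JJ A B T (zs + ε • w) - ⟪x, zs + ε • w⟫
      rw [h0]
      have h10 := hglobal (zs + ε • w)
      linarith
    have h6 := hmin.hasDerivAt_eq_zero hder2
    linarith [h6]
  have hvim : reachOutput A B T vstar = x := by
    refine ext_inner_right (𝕜 := ℝ) fun w => ?_
    rw [inner_reachOutput A B T hT hvmeas hsupne w]
    have hptw : ∀ s, ⟪vstar s, adjOut A B T w s⟫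
        = Nval * (⟪adjOut A B T zs s, adjOut A B T w s⟫ / ‖adjOut A B T zs s‖) := by
      intro s
      rw [hvstar]
      simp only [real_inner_smul_left]
      rw [div_eq_inv_mul]
    calc ∫ s in Ioc (0:ℝ) T, ⟪vstar s, adjOut A B T w s⟫
        = ∫ s in Ioc (0:ℝ) T, Nval * (⟪adjOut A B T zs s, adjOut A B T w s⟫
            / ‖adjOut A B T zs s‖) :=
          integral_congr_ae (Filter.Eventually.of_forall fun s => hptw s)
      _ = Nval * ∫ s in Ioc (0:ℝ) T, ⟪adjOut A B T zs s, adjOut A B T w s⟫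
            / ‖adjOut A B T zs s‖ := integral_const_mul _ _
      _ = ⟪x, w⟫ := hDw w
  have hvadm : NPAdmissible A B T y0 vstar := by
    refine ⟨hvmeas, lt_top_iff_ne_top.2 hsupne, ?_⟩
    rw [state, hvim, hxdef]
    exact add_neg_cancel _
  have hlow : ∀ v, NPAdmissible A B T y0 v → ENNReal.ofReal Nval ≤ supNorm T v := by
    intro v hv
    by_cases hbv : supNorm T v = ⊤
    · rw [hbv]; exact le_top
    · obtain ⟨hvme, _, hvst⟩ := hv
      set M := (supNorm T v).toReal with hM
      have hMae : ∀ᵐ s ∂(volume.restrict (Ioc (0:ℝ) T)), ‖v s‖ ≤ M := by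
        rw [← restrict_Ioo_eq_Ioc]; exact ae_norm_le_supNorm T v hbv
      have hreach : reachOutput A B T v = x := by
        rw [state] at hvst
        rw [hxdef]
        exact eq_neg_of_add_eq_zero_right hvst
      have hid := inner_reachOutput A B T hT hvme hbv zs
      rw [hreach] at hid
      have hint2 : Integrable (fun s => ⟪v s, adjOut A B T zs s⟫)
          (volume.restrict (Ioc (0:ℝ) T)) := by
        refine Integrable.mono' ((integrableOn_norm_adjOut A B T zs).const_mul M)
          ((hvme.inner (continuous_adjOut A B T zs).measurable).aestronglyMeasurable) ?_
        filter_upwards [hMae] with s hs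
        rw [Real.norm_eq_abs]
        calc |⟪v s, adjOut A B T zs s⟫| ≤ ‖v s‖ * ‖adjOut A B T zs s‖ :=
              abs_real_inner_le_norm _ _
          _ ≤ M * ‖adjOut A B T zs s‖ :=
              mul_le_mul_of_nonneg_right hs (norm_nonneg _)
      have hint : Nval ≤ M := by
        rw [hNval, hid]
        calc ∫ s in Ioc (0:ℝ) T, ⟪v s, adjOut A B T zs s⟫
            ≤ ∫ s in Ioc (0:ℝ) T, M * ‖adjOut A B T zs s‖ := by
              refine integral_mono_ae hint2
                ((integrableOn_norm_adjOut A B T zs).const_mul M) ?_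
              filter_upwards [hMae] with s hs
              calc ⟪v s, adjOut A B T zs s⟫ ≤ ‖v s‖ * ‖adjOut A B T zs s‖ :=
                    real_inner_le_norm _ _
                _ ≤ M * ‖adjOut A B T zs s‖ :=
                    mul_le_mul_of_nonneg_right hs (norm_nonneg _)
          _ = M * JJ A B T zs := integral_const_mul _ _
          _ = M := by rw [hzsJ, mul_one]
      calc ENNReal.ofReal Nval ≤ ENNReal.ofReal M := ENNReal.ofReal_le_ofReal hint
        _ = supNorm T v := ENNReal.ofReal_toReal hbv
  have hNmin : Nmin A B T y0 = ENNReal.ofReal Nval := by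
    refine le_antisymm ?_ (le_iInf fun v => le_iInf fun hv => hlow v hv)
    calc Nmin A B T y0 ≤ supNorm T vstar :=
          iInf_le_of_le vstar (iInf_le_of_le hvadm (le_refl _))
      _ = ENNReal.ofReal Nval := hsup_eq
  have hNtoReal : (Nmin A B T y0).toReal = Nval := by
    rw [hNmin, ENNReal.toReal_ofReal hNpos.le]
  constructor
  · exact ⟨vstar, hvadm, by rw [hsup_eq, hNmin]⟩
  · refine ⟨zs, haeIoo, ?_⟩
    intro v hvmin
    obtain ⟨⟨hvme, _, hvst⟩, hvsup⟩ := hvmin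
    have hbv : supNorm T v ≠ ⊤ := by rw [hvsup, hNmin]; exact ENNReal.ofReal_ne_top
    have hMval : (supNorm T v).toReal = Nval := by
      rw [hvsup, hNtoReal]
    have hMae : ∀ᵐ s ∂(volume.restrict (Ioc (0:ℝ) T)), ‖v s‖ ≤ Nval := by
      rw [← restrict_Ioo_eq_Ioc]
      have h7 := ae_norm_le_supNorm T v hbv
      rw [hMval] at h7
      exact h7
    have hreach : reachOutput A B T v = x := by
      rw [state] at hvst
      rw [hxdef]
      exact eq_neg_of_add_eq_zero_right hvst
    have hid := inner_reachOutput A B T hT hvme hbv zs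
    rw [hreach] at hid
    have hint2 : Integrable (fun s => ⟪v s, adjOut A B T zs s⟫)
        (volume.restrict (Ioc (0:ℝ) T)) := by
      refine Integrable.mono' ((integrableOn_norm_adjOut A B T zs).const_mul Nval)
        ((hvme.inner (continuous_adjOut A B T zs).measurable).aestronglyMeasurable) ?_
      filter_upwards [hMae] with s hs
      rw [Real.norm_eq_abs]
      calc |⟪v s, adjOut A B T zs s⟫| ≤ ‖v s‖ * ‖adjOut A B T zs s‖ :=
            abs_real_inner_le_norm _ _
        _ ≤ Nval * ‖adjOut A B T zs s‖ :=
            mul_le_mul_of_nonneg_right hs (norm_nonneg _)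
    have hgint : Integrable
        (fun s => Nval * ‖adjOut A B T zs s‖ - ⟪v s, adjOut A B T zs s⟫)
        (volume.restrict (Ioc (0:ℝ) T)) :=
      ((integrableOn_norm_adjOut A B T zs).const_mul Nval).sub hint2
    have hgnn : (fun _ => (0:ℝ)) ≤ᵐ[volume.restrict (Ioc (0:ℝ) T)]
        (fun s => Nval * ‖adjOut A B T zs s‖ - ⟪v s, adjOut A B T zs s⟫) := by
      filter_upwards [hMae] with s hs
      have h8 : ⟪v s, adjOut A B T zs s⟫ ≤ Nval * ‖adjOut A B T zs s‖ :=
        le_trans (real_inner_le_norm _ _)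
          (mul_le_mul_of_nonneg_right hs (norm_nonneg _))
      linarith
    have hgzero : ∫ s in Ioc (0:ℝ) T,
        (Nval * ‖adjOut A B T zs s‖ - ⟪v s, adjOut A B T zs s⟫) = 0 := by
      rw [integral_sub ((integrableOn_norm_adjOut A B T zs).const_mul Nval) hint2]
      rw [integral_const_mul]
      have h9 : ∫ s in Ioc (0:ℝ) T, ‖adjOut A B T zs s‖ = JJ A B T zs := rfl
      rw [h9, hzsJ, mul_one, ← hid, ← hNval]
      ring
    have hgae := (integral_eq_zero_iff_of_nonneg_ae hgnn hgint).1 hgzero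
    have hgae' : ∀ᵐ t ∂(volume.restrict (Ioo (0:ℝ) T)),
        Nval * ‖adjOut A B T zs t‖ - ⟪v t, adjOut A B T zs t⟫ = 0 := by
      rw [restrict_Ioo_eq_Ioc]
      filter_upwards [hgae] with t ht
      simpa using ht
    filter_upwards [hgae'] with t ht
    rw [hNtoReal]
    linarith


end ControlBBP
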